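/- arXiv:1809.03475 — 7 statements merged into one kernel-verified Lean document; each statement's English description precedes it below -/
import Mathlib

section
/- For every integer d ≥ 2 and every pair of orthonormal bases of ℂ^d with overlap matrix U, the random-access-code exclusion and independence satisfy the uncertainty relation E(U) ≥ Ind(U)²/(4d). -/
/-- Modulus of the overlap `⟨e i, f j⟩` of two orthonormal bases of `ℂ^d`. -/
noncomputable def racOverlap (d : ℕ)
    (e f : OrthonormalBasis (Fin d) ℂ (EuclideanSpace ℂ (Fin d))) (i j : Fin d) : ℝ :=
  ‖(inner ℂ (e i) (f j) : ℂ)‖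

/-- Random-access-code independence `Ind(U) = (1/(d-1))·((1/d)·Σ_{i,j} |U_{ij}| − 1)`. -/
noncomputable def racInd (d : ℕ)
    (e f : OrthonormalBasis (Fin d) ℂ (EuclideanSpace ℂ (Fin d))) : ℝ :=
  (1 / ((d : ℝ) - 1)) * ((1 / (d : ℝ)) * (∑ i, ∑ j, racOverlap d e f i j) - 1)

/-- Random-access-code exclusion
`E(U) = (1/2)·(1 − (1/d)·max_π Σ_i |U_{i,π(i)}|)`. -/
noncomputable def racExc (d : ℕ)
    (e f : OrthonormalBasis (Fin d) ℂ (EuclideanSpace ℂ (Fin d))) : ℝ :=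
  (1 / 2) * (1 - (1 / (d : ℝ)) *
    Finset.univ.sup' ⟨1, Finset.mem_univ 1⟩
      (fun π : Equiv.Perm (Fin d) => ∑ i, racOverlap d e f i (π i)))

/-!
Write `a i j = |U i j|`; each row of `a` is a unit vector. For any permutation `π`, Cauchy–Schwarz
on the off-`π` entries of row `i` gives `(∑ j, a i j - a i (π i))² ≤ (d - 1)(1 - a i (π i)²)
≤ 2 (d - 1)(1 - a i (π i))`, and Cauchy–Schwarz over the rows then bounds
`(S - M)² ≤ 2 d (d - 1)(d - M)` with `S = ∑ a i j` and `M = ∑ a i (π i)`. Since `M ≤ d ≤ S`, this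
controls `(S - d)²`, i.e. `Ind²`, by `d - M`, i.e. by the exclusion when `π` is the maximiser.
-/

open Finset

section UnitVector

variable {ι : Type*} [Fintype ι] {x : ι → ℝ}

lemma le_one_of_sum_sq_eq_one (hx : ∑ i, x i ^ 2 = 1) (j : ι) : x j ≤ 1 := by
  have : x j ^ 2 ≤ 1 := hx ▸ single_le_sum (fun i _ => sq_nonneg (x i)) (mem_univ j)
  exact (le_abs_self _).trans ((sq_le_one_iff_abs_le_one _).1 this)

lemma one_le_sum_of_sum_sq_eq_one (h0 : ∀ i, 0 ≤ x i) (hx : ∑ i, x i ^ 2 = 1) :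
    1 ≤ ∑ i, x i :=
  hx ▸ sum_le_sum fun i _ => by
    nlinarith [h0 i, le_one_of_sum_sq_eq_one hx i]

-- Cauchy–Schwarz on the `card ι - 1` entries other than `x k`, then `1 - t² ≤ 2 (1 - t)`.
lemma sq_sum_sub_le_of_sum_sq_eq_one (hx : ∑ i, x i ^ 2 = 1) (k : ι) :
    (∑ i, x i - x k) ^ 2 ≤ 2 * (Fintype.card ι - 1) * (1 - x k) := by
  classical
  have hcard : ((univ.erase k).card : ℝ) = Fintype.card ι - 1 := by
    rw [card_erase_of_mem (mem_univ k), card_univ,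
      Nat.cast_sub (Fintype.card_pos_iff.2 ⟨k⟩)]
    simp
  have hrest : ∑ i ∈ univ.erase k, x i ^ 2 = 1 - x k ^ 2 := by
    rw [← hx, ← sum_erase_add _ _ (mem_univ k), add_sub_cancel_right]
  have hcs := sq_sum_le_card_mul_sum_sq (s := univ.erase k) (f := x)
  rw [hcard, hrest, sum_erase_eq_sub (mem_univ k)] at hcs
  have hd : (0 : ℝ) ≤ Fintype.card ι - 1 := by
    rw [← hcard]; positivity
  nlinarith [mul_nonneg hd (sq_nonneg (1 - x k))]

end UnitVector

section RowUnitMatrix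

variable {ι : Type*} [Fintype ι] {a : ι → ι → ℝ}

lemma sq_sum_sub_sum_diag_le (ha : ∀ i, ∑ j, a i j ^ 2 = 1) (σ : ι → ι) :
    (∑ i, ∑ j, a i j - ∑ i, a i (σ i)) ^ 2 ≤
      2 * Fintype.card ι * (Fintype.card ι - 1) * (Fintype.card ι - ∑ i, a i (σ i)) := by
  calc (∑ i, ∑ j, a i j - ∑ i, a i (σ i)) ^ 2
      = (∑ i, (∑ j, a i j - a i (σ i))) ^ 2 := by rw [sum_sub_distrib]
    _ ≤ Fintype.card ι * ∑ i, (∑ j, a i j - a i (σ i)) ^ 2 := by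
      simpa using sq_sum_le_card_mul_sum_sq (s := univ) (f := fun i => ∑ j, a i j - a i (σ i))
    _ ≤ Fintype.card ι * ∑ i, 2 * (Fintype.card ι - 1) * (1 - a i (σ i)) := by
      gcongr with i
      exact sq_sum_sub_le_of_sum_sq_eq_one (ha i) (σ i)
    _ = _ := by
      rw [← mul_sum, sum_sub_distrib]
      simp only [sum_const, card_univ, nsmul_eq_mul, mul_one]
      ring

end RowUnitMatrix

lemma racOverlap_nonneg (d : ℕ) (e f : OrthonormalBasis (Fin d) ℂ (EuclideanSpace ℂ (Fin d)))
    (i j : Fin d) : 0 ≤ racOverlap d e f i j :=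
  norm_nonneg _

lemma sum_racOverlap_sq (d : ℕ) (e f : OrthonormalBasis (Fin d) ℂ (EuclideanSpace ℂ (Fin d)))
    (i : Fin d) : ∑ j, racOverlap d e f i j ^ 2 = 1 := by
  simp [racOverlap, f.sum_sq_norm_inner_left, e.orthonormal.1 i]

/-- For every `d ≥ 2` and every pair of orthonormal bases of `ℂ^d`, the
random-access-code exclusion and independence satisfy `E ≥ Ind²/(4d)`. -/
theorem rac_exclusion_uncertainty_relation (d : ℕ) (hd : 2 ≤ d)
    (e f : OrthonormalBasis (Fin d) ℂ (EuclideanSpace ℂ (Fin d))) :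
    racExc d e f ≥ (racInd d e f) ^ 2 / (4 * (d : ℝ)) := by
  obtain ⟨π, -, hπ⟩ := exists_mem_eq_sup' ⟨1, mem_univ 1⟩
    fun π : Equiv.Perm (Fin d) => ∑ i, racOverlap d e f i (π i)
  rw [racExc, racInd, hπ]
  set S := ∑ i, ∑ j, racOverlap d e f i j
  set M := ∑ i, racOverlap d e f i (π i)
  have hrows := sum_racOverlap_sq d e f
  have hSd : (d : ℝ) ≤ S := by
    simpa using sum_le_sum fun i (_ : i ∈ univ) =>
      one_le_sum_of_sum_sq_eq_one (racOverlap_nonneg d e f i) (hrows i)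
  have hMd : M ≤ d := by
    simpa using sum_le_sum fun i (_ : i ∈ univ) => le_one_of_sum_sq_eq_one (hrows i) (π i)
  have hkey : (S - M) ^ 2 ≤ 2 * d * (d - 1) * (d - M) := by
    simpa using sq_sum_sub_sum_diag_le hrows π
  have hd2 : (2 : ℝ) ≤ d := by exact_mod_cast hd
  have hInd : 1 / ((d : ℝ) - 1) * (1 / d * S - 1) = (S - d) / (d * (d - 1)) := by
    field_simp
  have hExc : 1 / 2 * (1 - 1 / (d : ℝ) * M) * (4 * d) = 2 * (d - M) := by
    field_simp
    ring
  have hdd : (1 : ℝ) ≤ d * (d - 1) := by nlinarith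
  have hscale : (d : ℝ) * (d - 1) ≤ (d * (d - 1)) ^ 2 := by nlinarith
  rw [ge_iff_le, div_le_iff₀ (by linarith), hExc, hInd, div_pow, div_le_iff₀ (by positivity)]
  calc (S - d) ^ 2 ≤ (S - M) ^ 2 := by gcongr
    _ ≤ 2 * d * (d - 1) * (d - M) := hkey
    _ ≤ 2 * (d - M) * (d * (d - 1)) ^ 2 := by
      nlinarith [mul_le_mul_of_nonneg_left hscale (by linarith : (0 : ℝ) ≤ 2 * (d - M))]
end

section
/- Let u and v be unit vectors in ℂ^d (d ≥ 1), and let P_u and P_v denote the orthogonal projections onto the lines spanned by u and v respectively. Then the operator norm of P_u + P_v equals 1 + |⟨u, v⟩|. -/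
/-!
Write `T = P_u + P_v`, `c = ⟪u, v⟫`, and `a = ⟪u, x⟫`, `b = ⟪v, x⟫`. Then `⟪T x, x⟫ = |a|² + |b|²`
while `‖T x‖² = |a|² + |b|² + 2 Re(ā b c) ≤ (1 + |c|)(|a|² + |b|²) = (1 + |c|) ⟪T x, x⟫`, and
Cauchy–Schwarz on the right gives `‖T x‖ ≤ (1 + |c|) ‖x‖`. Conversely, if `ω` is a unimodular
phase with `ω c = |c|`, then `u + ω v` is an eigenvector of `T` for the eigenvalue `1 + |c|`, and
it is nonzero because its inner product with `u` is `1 + |c|`.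
-/

open RCLike ContinuousLinearMap
open scoped InnerProductSpace ComplexConjugate

theorem RCLike.exists_norm_eq_one_mul_eq_norm {𝕜 : Type*} [RCLike 𝕜] (c : 𝕜) :
    ∃ ω : 𝕜, ‖ω‖ = 1 ∧ ω * c = ‖c‖ := by
  rcases eq_or_ne c 0 with rfl | hc
  · exact ⟨1, norm_one, by simp⟩
  have hc' : (‖c‖ : 𝕜) ≠ 0 := by simpa using hc
  refine ⟨conj c / ‖c‖, by simp [hc], ?_⟩
  rw [div_mul_eq_mul_div, conj_mul, sq, mul_div_assoc, div_self hc', mul_one]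

theorem ContinuousLinearMap.norm_le_opNorm_of_apply_eq_smul {𝕜 E : Type*}
    [NontriviallyNormedField 𝕜] [NormedAddCommGroup E] [NormedSpace 𝕜 E] (T : E →L[𝕜] E)
    {μ : 𝕜} {x : E} (hx : x ≠ 0) (h : T x = μ • x) : ‖μ‖ ≤ ‖T‖ :=
  le_of_mul_le_mul_right (by rw [← norm_smul, ← h]; exact T.le_opNorm x) (norm_pos_iff.mpr hx)

section

variable {𝕜 E : Type*} [RCLike 𝕜] [NormedAddCommGroup E] [InnerProductSpace 𝕜 E]

theorem norm_smul_add_smul_sq_le {u v : E} (hu : ‖u‖ = 1) (hv : ‖v‖ = 1) (a b : 𝕜) :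
    ‖a • u + b • v‖ ^ 2 ≤ (1 + ‖⟪u, v⟫_𝕜‖) * (‖a‖ ^ 2 + ‖b‖ ^ 2) := by
  have hcross : re ⟪a • u, b • v⟫_𝕜 ≤ ‖a‖ * ‖b‖ * ‖⟪u, v⟫_𝕜‖ :=
    calc re ⟪a • u, b • v⟫_𝕜 ≤ ‖⟪a • u, b • v⟫_𝕜‖ := re_le_norm _
      _ = ‖a‖ * ‖b‖ * ‖⟪u, v⟫_𝕜‖ := by
        rw [inner_smul_left, inner_smul_right, norm_mul, norm_mul, norm_conj, mul_assoc]
  rw [norm_add_sq (𝕜 := 𝕜), norm_smul, norm_smul, hu, hv]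
  nlinarith [two_mul_le_add_sq ‖a‖ ‖b‖, norm_nonneg ⟪u, v⟫_𝕜]

theorem innerSL_smulRight_add_apply (u v x : E) :
    ((innerSL 𝕜 u).smulRight u + (innerSL 𝕜 v).smulRight v) x = ⟪u, x⟫_𝕜 • u + ⟪v, x⟫_𝕜 • v := by
  simp

theorem re_inner_innerSL_smulRight_add_apply_self (u v x : E) :
    re ⟪((innerSL 𝕜 u).smulRight u + (innerSL 𝕜 v).smulRight v) x, x⟫_𝕜 =
      ‖⟪u, x⟫_𝕜‖ ^ 2 + ‖⟪v, x⟫_𝕜‖ ^ 2 := by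
  rw [innerSL_smulRight_add_apply, inner_add_left, inner_smul_left, inner_smul_left, map_add,
    RCLike.conj_mul, RCLike.conj_mul]
  norm_cast

theorem norm_innerSL_smulRight_add_le {u v : E} (hu : ‖u‖ = 1) (hv : ‖v‖ = 1) :
    ‖(innerSL 𝕜 u).smulRight u + (innerSL 𝕜 v).smulRight v‖ ≤ 1 + ‖⟪u, v⟫_𝕜‖ := by
  set T := (innerSL 𝕜 u).smulRight u + (innerSL 𝕜 v).smulRight v
  refine opNorm_le_bound _ (by positivity) fun x => ?_
  have key : ‖T x‖ * ‖T x‖ ≤ ‖T x‖ * ((1 + ‖⟪u, v⟫_𝕜‖) * ‖x‖) :=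
    calc ‖T x‖ * ‖T x‖ ≤ (1 + ‖⟪u, v⟫_𝕜‖) * (‖⟪u, x⟫_𝕜‖ ^ 2 + ‖⟪v, x⟫_𝕜‖ ^ 2) := by
          rw [← sq, innerSL_smulRight_add_apply]
          exact norm_smul_add_smul_sq_le hu hv _ _
      _ = (1 + ‖⟪u, v⟫_𝕜‖) * re ⟪T x, x⟫_𝕜 := by
          rw [re_inner_innerSL_smulRight_add_apply_self]
      _ ≤ (1 + ‖⟪u, v⟫_𝕜‖) * (‖T x‖ * ‖x‖) := by
          gcongr
          exact re_inner_le_norm _ _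
      _ = ‖T x‖ * ((1 + ‖⟪u, v⟫_𝕜‖) * ‖x‖) := by ring
  rcases (norm_nonneg (T x)).eq_or_lt with h | h
  · rw [← h]; positivity
  · exact le_of_mul_le_mul_left key h

theorem innerSL_smulRight_add_apply_add_smul {u v : E} (hu : ‖u‖ = 1) (hv : ‖v‖ = 1) {ω : 𝕜}
    (hω : ‖ω‖ = 1) (hωc : ω * ⟪u, v⟫_𝕜 = ‖⟪u, v⟫_𝕜‖) :
    ((innerSL 𝕜 u).smulRight u + (innerSL 𝕜 v).smulRight v) (u + ω • v) =
      ((1 + ‖⟪u, v⟫_𝕜‖ : ℝ) : 𝕜) • (u + ω • v) := by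
  have huu : ⟪u, u⟫_𝕜 = 1 := by simp [inner_self_eq_norm_sq_to_K, hu]
  have hvv : ⟪v, v⟫_𝕜 = 1 := by simp [inner_self_eq_norm_sq_to_K, hv]
  have hvu : ⟪v, u⟫_𝕜 = ω * ‖⟪u, v⟫_𝕜‖ := by
    calc ⟪v, u⟫_𝕜 = conj ⟪u, v⟫_𝕜 := (inner_conj_symm _ _).symm
      _ = ω * conj (ω * ⟪u, v⟫_𝕜) := by rw [map_mul, ← mul_assoc, mul_conj, hω]; simp
      _ = ω * ‖⟪u, v⟫_𝕜‖ := by rw [hωc, conj_ofReal]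
  rw [innerSL_smulRight_add_apply, inner_add_right, inner_add_right, inner_smul_right,
    inner_smul_right, huu, hvv, hvu, hωc, smul_add, smul_smul]
  push_cast
  congr 2
  ring

theorem le_norm_innerSL_smulRight_add {u v : E} (hu : ‖u‖ = 1) (hv : ‖v‖ = 1) :
    1 + ‖⟪u, v⟫_𝕜‖ ≤ ‖(innerSL 𝕜 u).smulRight u + (innerSL 𝕜 v).smulRight v‖ := by
  obtain ⟨ω, hω, hωc⟩ := exists_norm_eq_one_mul_eq_norm ⟪u, v⟫_𝕜
  have hx : u + ω • v ≠ 0 := by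
    intro h0
    have := congrArg (fun x => re ⟪u, x⟫_𝕜) h0
    simp only [inner_add_right, inner_smul_right, inner_self_eq_norm_sq_to_K, hu, hωc, map_add,
      map_one, one_pow, one_re, ofReal_re, inner_zero_right, map_zero] at this
    linarith [norm_nonneg ⟪u, v⟫_𝕜]
  have h := norm_le_opNorm_of_apply_eq_smul _ hx (innerSL_smulRight_add_apply_add_smul hu hv hω hωc)
  rwa [norm_ofReal, abs_of_nonneg (by positivity)] at h

end

theorem opNorm_add_rankOne_projections_general (d : ℕ)
    (u v : EuclideanSpace ℂ (Fin d)) (hu : ‖u‖ = 1) (hv : ‖v‖ = 1) :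
    ‖(innerSL ℂ u).smulRight u + (innerSL ℂ v).smulRight v‖ =
      1 + ‖(inner ℂ u v : ℂ)‖ :=
  (norm_innerSL_smulRight_add_le hu hv).antisymm (le_norm_innerSL_smulRight_add hu hv)

/-- For unit vectors `u, v ∈ ℂ^d`, the operator norm of the sum of the rank-one
orthogonal projections onto the lines spanned by `u` and `v` equals `1 + |⟨u,v⟩|`. -/
theorem opNorm_add_rankOne_projections (d : ℕ) (hd : 1 ≤ d)
    (u v : EuclideanSpace ℂ (Fin d)) (hu : ‖u‖ = 1) (hv : ‖v‖ = 1) :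
    ‖(innerSL ℂ u).smulRight u + (innerSL ℂ v).smulRight v‖ =
      1 + ‖(inner ℂ u v : ℂ)‖ :=
  opNorm_add_rankOne_projections_general d u v hu hv
end

section
/- Let d ≥ 1, let (e_i)_{i=1}^d and (f_j)_{j=1}^d be two orthonormal bases of ℂ^d, and let p and q be d×d matrices with nonnegative entries such that Σ_a p_{a,i} = 1 for every i and Σ_a q_{a,j} = 1 for every j. For each a set M_a = Σ_i p_{a,i}·P_{e_i} and N_a = Σ_j q_{a,j}·P_{f_j}, where P_w denotes the orthogonal projection onto the line spanned by w. Then Σ_{a,b=1}^d ‖M_a + N_b‖ ≤ d² + Σ_{i,j=1}^d |⟨e_i, f_j⟩|, where ‖·‖ is the operator norm. -/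
/-!
For 0/1 weights, `M_a` and `N_b` are the orthogonal projections `P`, `Q` onto the spans of a set
of `e_i` and a set of `f_j`, and `‖P + Q‖ ≤ 1 + K` with `K = Σ |⟨e_i, f_j⟩|` over these sets:
for `u = P x`, `v = Q x` one has `‖u‖² + ‖v‖² = re ⟨u + v, x⟩ ≤ ‖u + v‖ ‖x‖` and
`|⟨u, v⟩| ≤ K ‖u‖ ‖v‖`, whence `‖u‖² + ‖v‖² ≤ (1 + K) ‖x‖²`.

For stochastic weights, `‖M_a + N_b‖` is convex in each of the weight vectors `p_{a,·}`,
`q_{b,·} ∈ [0,1]^d` separately, while `1 + Σ_{i,j} p_{a,i} q_{b,j} |⟨e_i, f_j⟩|` is affine in each,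
so the bound at the vertices of the cube holds on the whole cube. Summing over `a, b` and using
that the columns of `p` and `q` sum to `1` gives `d² + Σ_{i,j} |⟨e_i, f_j⟩|`.
-/

open Finset RCLike InnerProductSpace
open scoped ComplexConjugate

section Projections

variable {𝕜 E : Type*} [RCLike 𝕜] [NormedAddCommGroup E] [InnerProductSpace 𝕜 E]

theorem norm_sq_add_norm_sq_le_of_norm_inner_le {u v x : E} {K : ℝ} (hK : 0 ≤ K)
    (hu : re ⟪u, x⟫_𝕜 = ‖u‖ ^ 2) (hv : re ⟪v, x⟫_𝕜 = ‖v‖ ^ 2)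
    (huv : ‖⟪u, v⟫_𝕜‖ ≤ K * (‖u‖ * ‖v‖)) :
    ‖u‖ ^ 2 + ‖v‖ ^ 2 ≤ (1 + K) * ‖x‖ ^ 2 := by
  set S := ‖u‖ ^ 2 + ‖v‖ ^ 2
  have hS : S ≤ ‖u + v‖ * ‖x‖ := calc
    S = re ⟪u + v, x⟫_𝕜 := by rw [inner_add_left, map_add, hu, hv]
    _ ≤ ‖u + v‖ * ‖x‖ := (re_le_norm _).trans (norm_inner_le_norm _ _)
  have hsum : ‖u + v‖ ^ 2 ≤ (1 + K) * S := by
    have : re ⟪u, v⟫_𝕜 ≤ K * (S / 2) :=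
      (re_le_norm _).trans (huv.trans (by gcongr; linarith [two_mul_le_add_sq ‖u‖ ‖v‖]))
    rw [norm_add_sq (𝕜 := 𝕜)]
    linarith
  have hS2 : S * S ≤ (1 + K) * ‖x‖ ^ 2 * S := calc
    S * S ≤ ‖u + v‖ ^ 2 * ‖x‖ ^ 2 := by
      rw [← mul_pow, sq]; exact mul_self_le_mul_self (by positivity) hS
    _ ≤ (1 + K) * S * ‖x‖ ^ 2 := by gcongr
    _ = (1 + K) * ‖x‖ ^ 2 * S := by ring
  rcases (by positivity : 0 ≤ S).eq_or_lt with h0 | hpos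
  · rw [← h0]; positivity
  · exact le_of_mul_le_mul_right hS2 hpos

theorem Orthonormal.norm_inner_sum_smul_le {ι κ : Type*} {e : ι → E} {f : κ → E}
    (he : Orthonormal 𝕜 e) (hf : Orthonormal 𝕜 f) (A : Finset ι) (B : Finset κ)
    (a : ι → 𝕜) (b : κ → 𝕜) :
    ‖⟪∑ i ∈ A, a i • e i, ∑ j ∈ B, b j • f j⟫_𝕜‖ ≤
      (∑ i ∈ A, ∑ j ∈ B, ‖⟪e i, f j⟫_𝕜‖) *
        (‖∑ i ∈ A, a i • e i‖ * ‖∑ j ∈ B, b j • f j‖) := by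
  have ha : ∀ i ∈ A, ‖a i‖ ≤ ‖∑ i ∈ A, a i • e i‖ := fun i hi => by
    simpa [he.inner_right_sum a hi, he.1 i] using
      norm_inner_le_norm (𝕜 := 𝕜) (e i) (∑ i ∈ A, a i • e i)
  have hb : ∀ j ∈ B, ‖b j‖ ≤ ‖∑ j ∈ B, b j • f j‖ := fun j hj => by
    simpa [hf.inner_right_sum b hj, hf.1 j] using
      norm_inner_le_norm (𝕜 := 𝕜) (f j) (∑ j ∈ B, b j • f j)
  set u := ∑ i ∈ A, a i • e i
  set v := ∑ j ∈ B, b j • f j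
  calc ‖⟪u, v⟫_𝕜‖ = ‖∑ i ∈ A, ∑ j ∈ B, b j * (conj (a i) * ⟪e i, f j⟫_𝕜)‖ := by
        simp only [u, v]
        rw [sum_inner]
        simp only [inner_smul_left, inner_sum, inner_smul_right]
    _ ≤ ∑ i ∈ A, ∑ j ∈ B, ‖v‖ * (‖u‖ * ‖⟪e i, f j⟫_𝕜‖) := by
        refine norm_sum_le_of_le _ fun i hi => norm_sum_le_of_le _ fun j hj => ?_
        rw [norm_mul, norm_mul, norm_conj]
        gcongr
        exacts [hb j hj, ha i hi]
    _ = _ := by simp only [sum_mul]; ring_nf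

theorem Orthonormal.re_inner_sum_inner_smul_eq_norm_sq {ι : Type*} {e : ι → E}
    (he : Orthonormal 𝕜 e) (A : Finset ι) (x : E) :
    re ⟪∑ i ∈ A, ⟪e i, x⟫_𝕜 • e i, x⟫_𝕜 = ‖∑ i ∈ A, ⟪e i, x⟫_𝕜 • e i‖ ^ 2 := by
  rw [← inner_self_eq_norm_sq (𝕜 := 𝕜), he.inner_sum, sum_inner]
  simp only [inner_smul_left]

theorem Orthonormal.norm_sum_rankOne_add_sum_rankOne_le {ι κ : Type*} {e : ι → E} {f : κ → E}
    (he : Orthonormal 𝕜 e) (hf : Orthonormal 𝕜 f) (A : Finset ι) (B : Finset κ) :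
    ‖∑ i ∈ A, rankOne 𝕜 (e i) (e i) + ∑ j ∈ B, rankOne 𝕜 (f j) (f j)‖ ≤
      1 + ∑ i ∈ A, ∑ j ∈ B, ‖⟪e i, f j⟫_𝕜‖ := by
  set T := ∑ i ∈ A, rankOne 𝕜 (e i) (e i) + ∑ j ∈ B, rankOne 𝕜 (f j) (f j)
  have hT : T.IsPositive :=
    (ContinuousLinearMap.isPositive_sum _ fun i _ => isPositive_rankOne_self (e i)).add
      (ContinuousLinearMap.isPositive_sum _ fun j _ => isPositive_rankOne_self (f j))
  have hK : 0 ≤ ∑ i ∈ A, ∑ j ∈ B, ‖⟪e i, f j⟫_𝕜‖ := by positivity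
  rw [T.norm_eq_iSup_rayleighQuotient hT.isSymmetric]
  refine ciSup_le fun x => ?_
  dsimp only [ContinuousLinearMap.rayleighQuotient]
  rw [ContinuousLinearMap.reApplyInnerSelf_apply,
    abs_of_nonneg (div_nonneg (hT.re_inner_nonneg_left x) (sq_nonneg _))]
  refine div_le_of_le_mul₀ (sq_nonneg _) (by positivity) ?_
  have hTx : T x = ∑ i ∈ A, ⟪e i, x⟫_𝕜 • e i + ∑ j ∈ B, ⟪f j, x⟫_𝕜 • f j := by
    simp [T]
  have hu := he.re_inner_sum_inner_smul_eq_norm_sq A x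
  have hv := hf.re_inner_sum_inner_smul_eq_norm_sq B x
  rw [hTx, inner_add_left, map_add, hu, hv]
  exact norm_sq_add_norm_sq_le_of_norm_inner_le hK hu hv (he.norm_inner_sum_smul_le hf A B _ _)

end Projections

section Convexity

variable {𝕜 : Type*} [RCLike 𝕜]

theorem convexOn_norm_sum_ofReal_smul_add_sub {ι V : Type*} [Fintype ι]
    [SeminormedAddCommGroup V] [NormedSpace 𝕜 V] (P : ι → V) (N : V) (c : ℝ) (r : ι → ℝ) :
    ConvexOn ℝ Set.univ fun t : ι → ℝ => ‖∑ i, (t i : 𝕜) • P i + N‖ - (c + ∑ i, t i * r i) := by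
  refine ⟨convex_univ, fun x _ y _ a b ha hb hab => ?_⟩
  have hab' : (a : 𝕜) + b = 1 := by exact_mod_cast hab
  have hvec : ∑ i, (((a • x + b • y) i : ℝ) : 𝕜) • P i + N =
      (a : 𝕜) • (∑ i, (x i : 𝕜) • P i + N) + (b : 𝕜) • (∑ i, (y i : 𝕜) • P i + N) := by
    conv_lhs => rw [← one_smul 𝕜 N, ← hab']
    simp only [Pi.add_apply, Pi.smul_apply, smul_eq_mul, ofReal_add, ofReal_mul, add_smul,
      mul_smul, smul_add, smul_sum, sum_add_distrib]
    abel
  have hnorm : ‖∑ i, (((a • x + b • y) i : ℝ) : 𝕜) • P i + N‖ ≤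
      a * ‖∑ i, (x i : 𝕜) • P i + N‖ + b * ‖∑ i, (y i : 𝕜) • P i + N‖ := by
    rw [hvec]
    refine (norm_add_le _ _).trans_eq ?_
    rw [norm_smul, norm_smul, norm_ofReal, norm_ofReal, abs_of_nonneg ha, abs_of_nonneg hb]
  have hlin : c + ∑ i, (a • x + b • y) i * r i =
      a * (c + ∑ i, x i * r i) + b * (c + ∑ i, y i * r i) := by
    simp only [Pi.add_apply, Pi.smul_apply, smul_eq_mul, add_mul, sum_add_distrib, mul_assoc,
      ← mul_sum]
    linear_combination (-c) * hab
  simp only [smul_eq_mul]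
  linarith

theorem ConvexOn.exists_ge_of_mem_Icc_zero_one {ι : Type*} [Finite ι] {f : (ι → ℝ) → ℝ}
    (hf : ConvexOn ℝ Set.univ f) {t : ι → ℝ} (ht : t ∈ Set.Icc 0 1) :
    ∃ t' ∈ Set.univ.pi fun _ => ({0, 1} : Set ℝ), f t ≤ f t' := by
  refine hf.exists_ge_of_mem_convexHull (Set.subset_univ _) ?_
  rwa [convexHull_pi, convexHull_pair, segment_eq_Icc zero_le_one, Set.pi_univ_Icc]

theorem Finset.sum_smul_eq_sum_filter_of_zero_or_one {ι R V : Type*} [Semiring R]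
    [Nontrivial R] [DecidableEq R] [AddCommMonoid V] [Module R V] {t : ι → R}
    (ht : ∀ i, t i = 0 ∨ t i = 1) (P : ι → V) (s : Finset ι) :
    ∑ i ∈ s, t i • P i = ∑ i ∈ s with t i = 1, P i := by
  rw [sum_filter]
  refine sum_congr rfl fun i _ => ?_
  rcases ht i with h | h <;> simp [h]

end Convexity

section Weighted

variable {𝕜 E : Type*} [RCLike 𝕜] [NormedAddCommGroup E] [InnerProductSpace 𝕜 E]
variable {ι κ : Type*} [Fintype ι] [Fintype κ] {e : ι → E} {f : κ → E}

theorem Orthonormal.norm_sum_smul_rankOne_add_sum_smul_rankOne_le_of_zero_or_one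
    (he : Orthonormal 𝕜 e) (hf : Orthonormal 𝕜 f) {t : ι → ℝ} {s : κ → ℝ}
    (ht : ∀ i, t i = 0 ∨ t i = 1) (hs : ∀ j, s j = 0 ∨ s j = 1) :
    ‖∑ i, (t i : 𝕜) • rankOne 𝕜 (e i) (e i) + ∑ j, (s j : 𝕜) • rankOne 𝕜 (f j) (f j)‖ ≤
      1 + ∑ i, ∑ j, t i * s j * ‖⟪e i, f j⟫_𝕜‖ := by
  have ht𝕜 : ∀ i, (t i : 𝕜) = 0 ∨ (t i : 𝕜) = 1 := fun i =>
    (ht i).imp (by simp [·]) (by simp [·])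
  have hs𝕜 : ∀ j, (s j : 𝕜) = 0 ∨ (s j : 𝕜) = 1 := fun j =>
    (hs j).imp (by simp [·]) (by simp [·])
  have hone : ∀ x : ℝ, (x : 𝕜) = 1 ↔ x = 1 := fun x => by norm_cast
  have hbil : ∑ i, ∑ j, t i * s j * ‖⟪e i, f j⟫_𝕜‖ =
      ∑ i with t i = 1, ∑ j with s j = 1, ‖⟪e i, f j⟫_𝕜‖ := calc
    _ = ∑ i, t i • ∑ j, s j • ‖⟪e i, f j⟫_𝕜‖ := by simp only [smul_eq_mul, mul_sum, mul_assoc]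
    _ = _ := by
      rw [sum_smul_eq_sum_filter_of_zero_or_one ht]
      exact sum_congr rfl fun i _ => sum_smul_eq_sum_filter_of_zero_or_one hs _ _
  simp only [sum_smul_eq_sum_filter_of_zero_or_one ht𝕜, sum_smul_eq_sum_filter_of_zero_or_one hs𝕜,
    hone, hbil]
  exact he.norm_sum_rankOne_add_sum_rankOne_le hf _ _

theorem Orthonormal.norm_sum_smul_rankOne_add_sum_smul_rankOne_le
    (he : Orthonormal 𝕜 e) (hf : Orthonormal 𝕜 f) {t : ι → ℝ} {s : κ → ℝ}
    (ht : t ∈ Set.Icc 0 1) (hs : s ∈ Set.Icc 0 1) :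
    ‖∑ i, (t i : 𝕜) • rankOne 𝕜 (e i) (e i) + ∑ j, (s j : 𝕜) • rankOne 𝕜 (f j) (f j)‖ ≤
      1 + ∑ i, ∑ j, t i * s j * ‖⟪e i, f j⟫_𝕜‖ := by
  let F : (ι → ℝ) → (κ → ℝ) → ℝ := fun t s =>
    ‖∑ i, (t i : 𝕜) • rankOne 𝕜 (e i) (e i) + ∑ j, (s j : 𝕜) • rankOne 𝕜 (f j) (f j)‖ -
      (1 + ∑ i, ∑ j, t i * s j * ‖⟪e i, f j⟫_𝕜‖)
  have hconv_t : ∀ s, ConvexOn ℝ Set.univ fun t => F t s := fun s =>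
    (convexOn_norm_sum_ofReal_smul_add_sub (fun i => rankOne 𝕜 (e i) (e i))
      (∑ j, (s j : 𝕜) • rankOne 𝕜 (f j) (f j)) 1 fun i => ∑ j, s j * ‖⟪e i, f j⟫_𝕜‖).congr
      fun t _ => by
        simp only [F, mul_sum, mul_assoc]
        rfl
  have hconv_s : ∀ t, ConvexOn ℝ Set.univ (F t) := fun t =>
    (convexOn_norm_sum_ofReal_smul_add_sub (fun j => rankOne 𝕜 (f j) (f j))
      (∑ i, (t i : 𝕜) • rankOne 𝕜 (e i) (e i)) 1 fun j => ∑ i, t i * ‖⟪e i, f j⟫_𝕜‖).congr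
      fun s _ => by
        simp only [F, add_comm (∑ j, _ • rankOne 𝕜 (f j) (f j))]
        congr 2
        rw [sum_comm]
        simp only [mul_sum]
        exact sum_congr rfl fun j _ => sum_congr rfl fun i _ => by ring
  obtain ⟨t', ht', htt'⟩ := (hconv_t s).exists_ge_of_mem_Icc_zero_one ht
  obtain ⟨s', hs', hss'⟩ := (hconv_s t').exists_ge_of_mem_Icc_zero_one hs
  have hvert : F t' s' ≤ 0 := sub_nonpos.2 <|
    he.norm_sum_smul_rankOne_add_sum_smul_rankOne_le_of_zero_or_one hf
      (Set.mem_univ_pi.1 ht') (Set.mem_univ_pi.1 hs')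
  exact sub_nonpos.1 ((htt'.trans hss').trans hvert)

end Weighted

theorem sum_sum_sum_sum_mul_of_sum_eq_one {α β ι κ : Type*} [Fintype α] [Fintype β] [Fintype ι]
    [Fintype κ] {p : α → ι → ℝ} {q : β → κ → ℝ} (hp : ∀ i, ∑ a, p a i = 1)
    (hq : ∀ j, ∑ b, q b j = 1) (c : ι → κ → ℝ) :
    ∑ a, ∑ b, ∑ i, ∑ j, p a i * q b j * c i j = ∑ i, ∑ j, c i j := by
  have hq' : ∀ i, ∑ b, ∑ j, q b j * c i j = ∑ j, c i j := fun i => by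
    rw [sum_comm]; simp [← sum_mul, hq]
  calc ∑ a, ∑ b, ∑ i, ∑ j, p a i * q b j * c i j
      = ∑ a, ∑ i, p a i * ∑ b, ∑ j, q b j * c i j := by
        refine sum_congr rfl fun a _ => ?_
        rw [sum_comm]
        simp only [mul_sum, mul_assoc]
    _ = ∑ i, ∑ j, c i j := by
        rw [sum_comm]; simp [← sum_mul, hp, hq']

theorem sum_opNorm_post_processed_le_general (d : ℕ)
    (e f : OrthonormalBasis (Fin d) ℂ (EuclideanSpace ℂ (Fin d)))
    (p q : Fin d → Fin d → ℝ)
    (hp : ∀ a i, 0 ≤ p a i) (hq : ∀ a j, 0 ≤ q a j)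
    (hpcol : ∀ i, ∑ a, p a i = 1) (hqcol : ∀ j, ∑ a, q a j = 1) :
    ∑ a, ∑ b,
        ‖(∑ i, ((p a i : ℂ) • (innerSL ℂ (e i)).smulRight (e i))) +
          (∑ j, ((q b j : ℂ) • (innerSL ℂ (f j)).smulRight (f j)))‖ ≤
      (d : ℝ) ^ 2 + ∑ i, ∑ j, ‖(inner ℂ (e i) (f j) : ℂ)‖ := by
  have hcube : ∀ {r : Fin d → Fin d → ℝ}, (∀ a i, 0 ≤ r a i) → (∀ i, ∑ a, r a i = 1) →
      ∀ a, r a ∈ Set.Icc 0 1 := fun hr hcol a =>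
    ⟨fun i => hr a i, fun i => (single_le_sum (fun b _ => hr b i) (mem_univ a)).trans_eq (hcol i)⟩
  calc _ ≤ ∑ a, ∑ b, (1 + ∑ i, ∑ j, p a i * q b j * ‖⟪e i, f j⟫_ℂ‖) :=
        sum_le_sum fun a _ => sum_le_sum fun b _ =>
          e.orthonormal.norm_sum_smul_rankOne_add_sum_smul_rankOne_le f.orthonormal
            (hcube hp hpcol a) (hcube hq hqcol b)
    _ = (d : ℝ) ^ 2 + ∑ i, ∑ j, ‖⟪e i, f j⟫_ℂ‖ := by
        simp only [sum_add_distrib, sum_const, card_univ, Fintype.card_fin, nsmul_eq_mul, mul_one,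
          sum_sum_sum_sum_mul_of_sum_eq_one hpcol hqcol]
        ring

/-- Let `(e_i)`, `(f_j)` be orthonormal bases of `ℂ^d` and let `p, q` be stochastic
post-processings (nonnegative entries, columns summing to 1).  For
`M_a = Σ_i p_{a,i}·P_{e_i}` and `N_a = Σ_j q_{a,j}·P_{f_j}` (rank-one orthogonal
projections `P_w`), one has `Σ_{a,b} ‖M_a + N_b‖ ≤ d² + Σ_{i,j} |⟨e_i, f_j⟩|`. -/
theorem sum_opNorm_post_processed_le (d : ℕ) (hd : 1 ≤ d)
    (e f : OrthonormalBasis (Fin d) ℂ (EuclideanSpace ℂ (Fin d)))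
    (p q : Fin d → Fin d → ℝ)
    (hp : ∀ a i, 0 ≤ p a i) (hq : ∀ a j, 0 ≤ q a j)
    (hpcol : ∀ i, ∑ a, p a i = 1) (hqcol : ∀ j, ∑ a, q a j = 1) :
    ∑ a, ∑ b,
        ‖(∑ i, ((p a i : ℂ) • (innerSL ℂ (e i)).smulRight (e i))) +
          (∑ j, ((q b j : ℂ) • (innerSL ℂ (f j)).smulRight (f j)))‖ ≤
      (d : ℝ) ^ 2 + ∑ i, ∑ j, ‖(inner ℂ (e i) (f j) : ℂ)‖ :=
  sum_opNorm_post_processed_le_general d e f p q hp hq hpcol hqcol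
end

section
/- Let n_x, n_z be real numbers with n_x² + n_z² = 1, and let σ_x = [[0,1],[1,0]] and σ_z = [[1,0],[0,−1]] be the Pauli matrices. Then for every unit vector ψ ∈ ℂ², writing z = ⟨ψ, σ_z ψ⟩ and x = ⟨ψ, (n_x σ_x + n_z σ_z) ψ⟩ (both real since the operators are Hermitian), one has (1−n_z)·(x+z)² + (1+n_z)·(x−z)² ≤ 2·n_x². -/
def pauliX : Matrix (Fin 2) (Fin 2) ℂ := !![0, 1; 1, 0]

def pauliZ : Matrix (Fin 2) (Fin 2) ℂ := !![1, 0; 0, -1]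

/-!
Write `X = ⟨σ_x⟩` and `Z = ⟨σ_z⟩`. Linearity gives `x = n_x X + n_z Z` and `z = Z`, and using
`1 - n_z² = n_x²` the left-hand side collapses to `2 n_x² (X² + Z²)`. For `ψ = (a, b)` one has
`X = 2 Re (ā b)` and `Z = |a|² - |b|²`, so `X² + Z² ≤ 4 |a|² |b|² + (|a|² - |b|²)² = ‖ψ‖⁴`:
the pair `(X, Z)` lies in the unit disc, the shadow of the Bloch sphere.
-/

open ComplexConjugate

noncomputable def expectation {n : Type*} [Fintype n] [DecidableEq n] (A : Matrix n n ℂ)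
    (ψ : EuclideanSpace ℂ n) : ℝ :=
  (inner ℂ ψ (Matrix.toEuclideanLin A ψ)).re

section

variable {n : Type*} [Fintype n] [DecidableEq n]

theorem expectation_add (A B : Matrix n n ℂ) (ψ : EuclideanSpace ℂ n) :
    expectation (A + B) ψ = expectation A ψ + expectation B ψ := by
  simp only [expectation, map_add, LinearMap.add_apply, inner_add_right, Complex.add_re]

theorem expectation_ofReal_smul (r : ℝ) (A : Matrix n n ℂ) (ψ : EuclideanSpace ℂ n) :
    expectation ((r : ℂ) • A) ψ = r * expectation A ψ := by
  simp only [expectation, map_smul, LinearMap.smul_apply, inner_smul_right, Complex.re_ofReal_mul]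

end

theorem inner_toEuclideanLin_pauliX (ψ : EuclideanSpace ℂ (Fin 2)) :
    inner ℂ ψ (Matrix.toEuclideanLin pauliX ψ) = conj (ψ 0) * ψ 1 + conj (ψ 1) * ψ 0 := by
  simp [PiLp.inner_apply, Fin.sum_univ_two, Matrix.mulVec, dotProduct, pauliX, mul_comm]

theorem inner_toEuclideanLin_pauliZ (ψ : EuclideanSpace ℂ (Fin 2)) :
    inner ℂ ψ (Matrix.toEuclideanLin pauliZ ψ) = conj (ψ 0) * ψ 0 - conj (ψ 1) * ψ 1 := by
  simp [PiLp.inner_apply, Fin.sum_univ_two, Matrix.mulVec, dotProduct, pauliZ, mul_comm,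
    sub_eq_add_neg]

theorem expectation_pauliX (ψ : EuclideanSpace ℂ (Fin 2)) :
    expectation pauliX ψ = 2 * (conj (ψ 0) * ψ 1).re := by
  have hswap : conj (ψ 1) * ψ 0 = conj (conj (ψ 0) * ψ 1) := by
    rw [map_mul, Complex.conj_conj, mul_comm]
  rw [expectation, inner_toEuclideanLin_pauliX, hswap, Complex.add_re, Complex.conj_re, two_mul]

theorem expectation_pauliZ (ψ : EuclideanSpace ℂ (Fin 2)) :
    expectation pauliZ ψ = ‖ψ 0‖ ^ 2 - ‖ψ 1‖ ^ 2 := by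
  rw [expectation, inner_toEuclideanLin_pauliZ, Complex.conj_mul', Complex.conj_mul',
    Complex.sub_re, ← Complex.ofReal_pow, ← Complex.ofReal_pow, Complex.ofReal_re,
    Complex.ofReal_re]

theorem sq_expectation_pauliX_add_sq_expectation_pauliZ_le (ψ : EuclideanSpace ℂ (Fin 2)) :
    expectation pauliX ψ ^ 2 + expectation pauliZ ψ ^ 2 ≤ (‖ψ‖ ^ 2) ^ 2 := by
  have hre : |(conj (ψ 0) * ψ 1).re| ≤ ‖ψ 0‖ * ‖ψ 1‖ := by
    simpa using Complex.abs_re_le_norm (conj (ψ 0) * ψ 1)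
  rw [expectation_pauliX, expectation_pauliZ, EuclideanSpace.norm_sq_eq, Fin.sum_univ_two]
  nlinarith [sq_abs (conj (ψ 0) * ψ 1).re, abs_nonneg (conj (ψ 0) * ψ 1).re]

theorem ellipse_form_eq_of_sq_add_sq_eq_one {nx nz : ℝ} (hn : nx ^ 2 + nz ^ 2 = 1) (X Z : ℝ) :
    (1 - nz) * (nx * X + nz * Z + Z) ^ 2 + (1 + nz) * (nx * X + nz * Z - Z) ^ 2 =
      2 * nx ^ 2 * (X ^ 2 + Z ^ 2) := by
  linear_combination (-2 * Z ^ 2) * hn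

/-- For `n_x² + n_z² = 1` and any unit vector `ψ ∈ ℂ²`, the expectation values
`z = ⟨ψ, σ_z ψ⟩` and `x = ⟨ψ, (n_x σ_x + n_z σ_z) ψ⟩` satisfy
`(1−n_z)(x+z)² + (1+n_z)(x−z)² ≤ 2 n_x²`, i.e. `(z,x)` lies in the ellipse with
semiaxes `a = n_x/√(1−n_z)`, `b = n_x/√(1+n_z)`. -/
theorem qubit_statistics_ellipse (nx nz : ℝ) (hn : nx ^ 2 + nz ^ 2 = 1)
    (ψ : EuclideanSpace ℂ (Fin 2)) (hψ : ‖ψ‖ = 1) :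
    (1 - nz) *
        ((inner ℂ ψ (Matrix.toEuclideanLin ((nx : ℂ) • pauliX + (nz : ℂ) • pauliZ) ψ) : ℂ).re +
          (inner ℂ ψ (Matrix.toEuclideanLin pauliZ ψ) : ℂ).re) ^ 2 +
      (1 + nz) *
        ((inner ℂ ψ (Matrix.toEuclideanLin ((nx : ℂ) • pauliX + (nz : ℂ) • pauliZ) ψ) : ℂ).re -
          (inner ℂ ψ (Matrix.toEuclideanLin pauliZ ψ) : ℂ).re) ^ 2 ≤
      2 * nx ^ 2 := by
  change (1 - nz) * (expectation _ ψ + expectation pauliZ ψ) ^ 2 +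
      (1 + nz) * (expectation _ ψ - expectation pauliZ ψ) ^ 2 ≤ _
  have hbloch := sq_expectation_pauliX_add_sq_expectation_pauliZ_le ψ
  rw [hψ, one_pow, one_pow] at hbloch
  rw [expectation_add, expectation_ofReal_smul, expectation_ofReal_smul,
    ellipse_form_eq_of_sq_add_sq_eq_one hn]
  exact mul_le_of_le_one_right (by positivity) hbloch
end

section
/- Let c and u be real numbers with 0 ≤ c, 0 ≤ u ≤ 1 and c² + (1−u)² = 1. Then 2 + 2(c − u) ≤ 2√2, with equality when c = 1 − u = 1/√2. -/
/-! Since `(c - (1 - u))² ≥ 0`, we get `(c + (1 - u))² ≤ 2 (c² + (1 - u)²) = 2`, hence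
`I = 2 (c + (1 - u)) ≤ 2√2`, attained at `c = 1 - u = 1/√2`. -/

theorem add_le_sqrt_two_mul_sq_add_sq (a b : ℝ) : a + b ≤ √(2 * (a ^ 2 + b ^ 2)) :=
  Real.le_sqrt_of_sq_le (by nlinarith [sq_nonneg (a - b)])

theorem one_div_sqrt_two_add_one_div_sqrt_two : 1 / √2 + 1 / √2 = √2 := by
  rw [← add_div, one_add_one_eq_two, Real.div_sqrt]

theorem tsirelson_from_pur_general (c u : ℝ)
    (hpur : c ^ 2 + (1 - u) ^ 2 = 1) :
    2 + 2 * (c - u) ≤ 2 * Real.sqrt 2 ∧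
      ((c = 1 / Real.sqrt 2 ∧ 1 - u = 1 / Real.sqrt 2) →
        2 + 2 * (c - u) = 2 * Real.sqrt 2) := by
  constructor
  · have h := add_le_sqrt_two_mul_sq_add_sq c (1 - u)
    rw [hpur, mul_one] at h
    linarith
  · rintro ⟨hc, hu⟩
    have h : c + (1 - u) = √2 := by rw [hc, hu, one_div_sqrt_two_add_one_div_sqrt_two]
    linarith

/-- Tsirelson bound from the uncertainty relation: if `c ≥ 0`, `0 ≤ u ≤ 1` and
`c² + (1−u)² = 1`, then the CHSH value `2 + 2(c − u)` is at most `2√2`, with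
equality when `c = 1 − u = 1/√2`. -/
theorem tsirelson_from_pur (c u : ℝ) (hc : 0 ≤ c) (hu0 : 0 ≤ u) (hu1 : u ≤ 1)
    (hpur : c ^ 2 + (1 - u) ^ 2 = 1) :
    2 + 2 * (c - u) ≤ 2 * Real.sqrt 2 ∧
      ((c = 1 / Real.sqrt 2 ∧ 1 - u = 1 / Real.sqrt 2) →
        2 + 2 * (c - u) = 2 * Real.sqrt 2) :=
  tsirelson_from_pur_general c u hpur
end

section
/- Let t be a real number with 0 ≤ t ≤ 1/2, and let a, b, c, d ∈ [t, 1−t]. Then the convex hull of the four points (a,0), (1,b), (c,1), (0,d) in ℝ² contains the square [(1−t)/2, (1+t)/2] × [(1−t)/2, (1+t)/2]. -/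
/-! Write `A = (a, 0)`, `B = (1, b)`, `C = (c, 1)`, `D = (0, d)`. For a point `(x, y)` of the
square, the diagonals `AC` and `DB` contain points `(u, y)` and `(x, v)` of the hull. The four
edge midpoints lie in the four closed quadrants around `(x, y)` (the midpoint
`((1 + c) / 2, (1 + b) / 2)` of `BC` dominates the corner `((1 + t) / 2, (1 + t) / 2)`, and so
on), and the one in the quadrant facing away from `(u, y)` and `(x, v)` spans with them a triangle
containing `(x, y)`. -/

open AffineMap Set

theorem AffineMap.lineMap_prodMk {k V₁ V₂ : Type*} [Ring k] [AddCommGroup V₁] [Module k V₁]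
    [AddCommGroup V₂] [Module k V₂] (x₀ x₁ : V₁) (y₀ y₁ : V₂) (c : k) :
    lineMap (x₀, y₀) (x₁, y₁) c = (lineMap x₀ x₁ c, lineMap y₀ y₁ c) :=
  Prod.ext (fst_lineMap _ _ c) (snd_lineMap _ _ c)

section
variable {𝕜 : Type*} [Field 𝕜] [LinearOrder 𝕜] [IsStrictOrderedRing 𝕜]

theorem wbtw_of_le_of_le {x y z : 𝕜} (hxy : x ≤ y) (hyz : y ≤ z) : Wbtw 𝕜 x y z := by
  rw [Wbtw, affineSegment_eq_segment, segment_eq_Icc (hxy.trans hyz)]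
  exact ⟨hxy, hyz⟩

/-- The segment from `(u, y)` to `(w₁, w₂)` passes through some `(x, y')` with `y` between `v`
and `y'`, and `(x, y)` lies on the segment from `(x, v)` to `(x, y')`. -/
theorem Convex.mk_mem_of_wbtw {E F : Type*} [AddCommGroup E] [Module 𝕜 E] [AddCommGroup F]
    [Module 𝕜 F] {K : Set (E × F)} (hK : Convex 𝕜 K) {x u w₁ : E} {y v w₂ : F}
    (hu : (u, y) ∈ K) (hv : (x, v) ∈ K) (hw : (w₁, w₂) ∈ K)
    (hx : Wbtw 𝕜 u x w₁) (hy : Wbtw 𝕜 v y w₂) : (x, y) ∈ K := by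
  obtain ⟨θ, hθ, rfl⟩ := hx
  obtain ⟨μ, hμ, hyμ⟩ := hy.trans_right_left (⟨θ, hθ, rfl⟩ : Wbtw 𝕜 y (lineMap y w₂ θ) w₂)
  have hp : (lineMap u w₁ θ, lineMap y w₂ θ) ∈ K := by
    simpa only [lineMap_prodMk] using hK.lineMap_mem hu hw hθ
  rw [← hyμ]
  simpa only [lineMap_prodMk, lineMap_same_apply] using hK.lineMap_mem hv hp hμ

theorem Convex.mk_mem_of_mem_quadrants {K : Set (𝕜 × 𝕜)} (hK : Convex 𝕜 K) {x y u v : 𝕜}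
    (hu : (u, y) ∈ K) (hv : (x, v) ∈ K)
    (hNE : ∃ w ∈ K, x ≤ w.1 ∧ y ≤ w.2) (hSE : ∃ w ∈ K, x ≤ w.1 ∧ w.2 ≤ y)
    (hNW : ∃ w ∈ K, w.1 ≤ x ∧ y ≤ w.2) (hSW : ∃ w ∈ K, w.1 ≤ x ∧ w.2 ≤ y) : (x, y) ∈ K := by
  rcases le_total u x with hux | hxu <;> rcases le_total v y with hvy | hyv
  · obtain ⟨w, hw, hxw, hyw⟩ := hNE
    exact hK.mk_mem_of_wbtw hu hv hw (wbtw_of_le_of_le hux hxw) (wbtw_of_le_of_le hvy hyw)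
  · obtain ⟨w, hw, hxw, hwy⟩ := hSE
    exact hK.mk_mem_of_wbtw hu hv hw (wbtw_of_le_of_le hux hxw) (wbtw_of_le_of_le hwy hyv).symm
  · obtain ⟨w, hw, hwx, hyw⟩ := hNW
    exact hK.mk_mem_of_wbtw hu hv hw (wbtw_of_le_of_le hwx hxu).symm (wbtw_of_le_of_le hvy hyw)
  · obtain ⟨w, hw, hwx, hwy⟩ := hSW
    exact hK.mk_mem_of_wbtw hu hv hw (wbtw_of_le_of_le hwx hxu).symm
      (wbtw_of_le_of_le hwy hyv).symm

end

theorem square_subset_convexHull_edge_points_general (t a b c d : ℝ)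
    (ha : a ∈ Set.Icc t (1 - t)) (hb : b ∈ Set.Icc t (1 - t))
    (hc : c ∈ Set.Icc t (1 - t)) (hd : d ∈ Set.Icc t (1 - t)) :
    Set.Icc ((1 - t) / 2) ((1 + t) / 2) ×ˢ Set.Icc ((1 - t) / 2) ((1 + t) / 2) ⊆
      convexHull ℝ ({(a, 0), (1, b), (c, 1), (0, d)} : Set (ℝ × ℝ)) := by
  rintro ⟨x, y⟩ ⟨⟨hx₁, hx₂⟩, hy₁, hy₂⟩
  set K := convexHull ℝ ({(a, 0), (1, b), (c, 1), (0, d)} : Set (ℝ × ℝ))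
  have hK : Convex ℝ K := convex_convexHull ℝ _
  have hA : ((a, 0) : ℝ × ℝ) ∈ K := subset_convexHull ℝ _ (by simp)
  have hB : ((1, b) : ℝ × ℝ) ∈ K := subset_convexHull ℝ _ (by simp)
  have hC : ((c, 1) : ℝ × ℝ) ∈ K := subset_convexHull ℝ _ (by simp)
  have hD : ((0, d) : ℝ × ℝ) ∈ K := subset_convexHull ℝ _ (by simp)
  have hmid {p₁ p₂ q₁ q₂ : ℝ} (hp : (p₁, p₂) ∈ K) (hq : (q₁, q₂) ∈ K) :
      ((p₁ + q₁) / 2, (p₂ + q₂) / 2) ∈ K := by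
    convert hK.midpoint_mem hp hq using 1
    simp only [midpoint_eq_smul_add, invOf_eq_inv, Prod.mk_add_mk, Prod.smul_mk, smul_eq_mul]
    ring_nf
  have ht : t ≤ 1 - t := ha.1.trans ha.2
  have hx : x ∈ Icc (0 : ℝ) 1 := ⟨by linarith, by linarith⟩
  have hy : y ∈ Icc (0 : ℝ) 1 := ⟨by linarith, by linarith⟩
  have hAC : (lineMap a c y, y) ∈ K := by
    simpa [lineMap_apply_module] using hK.lineMap_mem hA hC hy
  have hDB : (x, lineMap d b x) ∈ K := by
    simpa [lineMap_apply_module] using hK.lineMap_mem hD hB hx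
  simp only [mem_Icc] at ha hb hc hd
  exact hK.mk_mem_of_mem_quadrants hAC hDB
    ⟨_, hmid hB hC, by linarith, by linarith⟩ ⟨_, hmid hA hB, by linarith, by linarith⟩
    ⟨_, hmid hC hD, by linarith, by linarith⟩ ⟨_, hmid hD hA, by linarith, by linarith⟩

/-- Let `0 ≤ t ≤ 1/2` and `a, b, c, d ∈ [t, 1−t]`.  The convex hull of the four
points `(a,0), (1,b), (c,1), (0,d)` (one on each edge of the unit square) contains
the axis-aligned square `[(1−t)/2, (1+t)/2]²` of side `t` centered at `(1/2,1/2)`. -/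
theorem square_subset_convexHull_edge_points (t a b c d : ℝ)
    (ht0 : 0 ≤ t) (ht1 : t ≤ 1 / 2)
    (ha : a ∈ Set.Icc t (1 - t)) (hb : b ∈ Set.Icc t (1 - t))
    (hc : c ∈ Set.Icc t (1 - t)) (hd : d ∈ Set.Icc t (1 - t)) :
    Set.Icc ((1 - t) / 2) ((1 + t) / 2) ×ˢ Set.Icc ((1 - t) / 2) ((1 + t) / 2) ⊆
      convexHull ℝ ({(a, 0), (1, b), (c, 1), (0, d)} : Set (ℝ × ℝ)) :=
  square_subset_convexHull_edge_points_general t a b c d ha hb hc hd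
end

section
/- Let K ⊆ [0,1]² be a nonempty compact convex set that intersects each of the four closed edges of the unit square. Define the rescaling complementarity C_r(K) = sup{ r ≥ 0 : there exists x ∈ ℝ² with x + [0,r]² ⊆ K } and the uncertainty U(K) = min over (p,q) ∈ K of min over corners c ∈ {0,1}² of (1/2)·(|p − c₁| + |q − c₂|). Then 2·C_r(K) ≥ U(K). -/
/-!
Let `U` be the uncertainty. A point of `K` on the bottom edge is at `ℓ¹`-distance at least `2U`
from both bottom corners, so its abscissa lies in `[2U, 1 - 2U]`; likewise on the other three
edges. By convexity `K` contains the segment joining the bottom and top points, the segment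
joining the left and right points, and every midpoint of a point of one with a point of the
other. These midpoints cover the axis-parallel square of side `U` centred at the crossing point
of the two segments. Indeed, let `α` and `β` be the horizontal and vertical spans of the
segments and `D = 1 - α β` the determinant of the linear system for the two segment parameters:
at the crossing point both parameters, scaled by `D`, stay `2U` away from `0` and from `D`, and
a displacement of at most `U / 2` in each coordinate moves them by at most `2U`.
Hence `C_r ≥ U`.
-/

open Set

lemma le_add_mul_sub {m x y w : ℝ} (hx : m ≤ x) (hy : m ≤ y) (hw : w ∈ Icc 0 1) :
    m ≤ x + w * (y - x) := by
  nlinarith [hw.1, hw.2]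

lemma mem_Icc_of_two_mul_le_abs_sub {x u : ℝ} (hx : x ∈ Icc 0 1) (h₀ : 2 * u ≤ |x - 0|)
    (h₁ : 2 * u ≤ |x - 1|) : x ∈ Icc (2 * u) (1 - 2 * u) := by
  rw [abs_of_nonneg (by linarith [hx.1]), sub_zero] at h₀
  rw [abs_of_nonpos (by linarith [hx.2])] at h₁
  exact ⟨h₀, by linarith⟩

section CornerBound

variable {K : Set (ℝ × ℝ)} {u : ℝ}

lemma fst_mem_Icc_of_corner_bound (hK : K ⊆ Icc 0 1 ×ˢ Icc 0 1)
    (hu : ∀ z ∈ K, ∀ c₁ ∈ ({0, 1} : Set ℝ), ∀ c₂ ∈ ({0, 1} : Set ℝ),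
      u ≤ (|z.1 - c₁| + |z.2 - c₂|) / 2)
    {x c : ℝ} (hc : c ∈ ({0, 1} : Set ℝ)) (hx : (x, c) ∈ K) : x ∈ Icc (2 * u) (1 - 2 * u) := by
  have h₀ := hu _ hx 0 (by simp) c hc
  have h₁ := hu _ hx 1 (by simp) c hc
  simp only [sub_self, abs_zero, add_zero] at h₀ h₁
  exact mem_Icc_of_two_mul_le_abs_sub (hK hx).1 (by linarith) (by linarith)

lemma snd_mem_Icc_of_corner_bound (hK : K ⊆ Icc 0 1 ×ˢ Icc 0 1)
    (hu : ∀ z ∈ K, ∀ c₁ ∈ ({0, 1} : Set ℝ), ∀ c₂ ∈ ({0, 1} : Set ℝ),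
      u ≤ (|z.1 - c₁| + |z.2 - c₂|) / 2)
    {y c : ℝ} (hc : c ∈ ({0, 1} : Set ℝ)) (hy : (c, y) ∈ K) : y ∈ Icc (2 * u) (1 - 2 * u) := by
  have h₀ := hu _ hy c hc 0 (by simp)
  have h₁ := hu _ hy c hc 1 (by simp)
  simp only [sub_self, abs_zero, zero_add] at h₀ h₁
  exact mem_Icc_of_two_mul_le_abs_sub (hK hy).2 (by linarith) (by linarith)

end CornerBound

lemma le_one_of_Icc_prod_Icc_subset {K : Set (ℝ × ℝ)} (hK : K ⊆ Icc 0 1 ×ˢ Icc 0 1)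
    {x : ℝ × ℝ} {r : ℝ} (hr : 0 ≤ r) (hx : Icc x.1 (x.1 + r) ×ˢ Icc x.2 (x.2 + r) ⊆ K) :
    r ≤ 1 := by
  have h₁ : x.1 ≤ x.1 + r := le_add_of_nonneg_right hr
  have h₂ : x.2 ∈ Icc x.2 (x.2 + r) := left_mem_Icc.2 (le_add_of_nonneg_right hr)
  have hleft := hK (hx (mk_mem_prod (left_mem_Icc.2 h₁) h₂))
  have hright := hK (hx (mk_mem_prod (right_mem_Icc.2 h₁) h₂))
  linarith [hleft.1.1, hright.1.2]

lemma crossing_param_mem_Icc {u x₀ y₀ α β ε₁ ε₂ : ℝ} (hx₀ : x₀ ∈ Icc (2 * u) (1 - 2 * u))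
    (hx₁ : x₀ + α ∈ Icc (2 * u) (1 - 2 * u)) (hy₀ : y₀ ∈ Icc 0 1) (hy₁ : y₀ + β ∈ Icc 0 1)
    (hε₁ : |ε₁| ≤ u) (hε₂ : |ε₂| ≤ u) (hD : 0 < 1 - α * β) :
    (x₀ + y₀ * α + ε₁ - α * ε₂) / (1 - α * β) ∈ Icc 0 1 := by
  have hu : 0 ≤ u := (abs_nonneg ε₁).trans hε₁
  have hα : |α| ≤ 1 := abs_le.2 ⟨by linarith [hx₀.2, hx₁.1], by linarith [hx₀.1, hx₁.2]⟩
  have hε : |ε₁ - α * ε₂| ≤ 2 * u :=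
    calc |ε₁ - α * ε₂| ≤ |ε₁| + |α| * |ε₂| := (abs_sub _ _).trans_eq (by rw [abs_mul])
      _ ≤ u + 1 * u := by gcongr
      _ = 2 * u := by ring
  -- `x₀ + y₀ α` and `1 - α β - (x₀ + y₀ α) = 1 - x₀ - (y₀ + β) α` interpolate edge coordinates.
  have hlow : 2 * u ≤ x₀ + y₀ * ((x₀ + α) - x₀) := le_add_mul_sub hx₀.1 hx₁.1 hy₀
  have hupp : 2 * u ≤ (1 - x₀) + (y₀ + β) * ((1 - (x₀ + α)) - (1 - x₀)) :=
    le_add_mul_sub (by linarith [hx₀.2]) (by linarith [hx₁.2]) hy₁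
  rw [mem_Icc, le_div_iff₀ hD, div_le_one hD]
  constructor <;> nlinarith [abs_le.1 hε]

section EdgePoints

variable {K : Set (ℝ × ℝ)} {x₀ y₀ α β : ℝ}

lemma midpoint_segments_mem (hK : Convex ℝ K) (h₀ : (x₀, 0) ∈ K) (h₁ : (x₀ + α, 1) ∈ K)
    (h₀' : (0, y₀) ∈ K) (h₁' : (1, y₀ + β) ∈ K) {s t : ℝ} (hs : s ∈ Icc 0 1)
    (ht : t ∈ Icc 0 1) : ((x₀ + t * α + s) / 2, (y₀ + s * β + t) / 2) ∈ K := by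
  have hX : (x₀ + t * α, t) ∈ K := by simpa using hK.add_smul_sub_mem h₀ h₁ ht
  have hY : (s, y₀ + s * β) ∈ K := by simpa using hK.add_smul_sub_mem h₀' h₁' hs
  convert hK.add_smul_sub_mem hX hY (t := 1 / 2) (by norm_num) using 1
  ext <;> simp <;> ring

lemma crossing_add_mem (hK : Convex ℝ K) (h₀ : (x₀, 0) ∈ K) (h₁ : (x₀ + α, 1) ∈ K)
    (h₀' : (0, y₀) ∈ K) (h₁' : (1, y₀ + β) ∈ K) (hD : 1 - α * β ≠ 0) {ε₁ ε₂ : ℝ}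
    (hs : (x₀ + y₀ * α + ε₁ - α * ε₂) / (1 - α * β) ∈ Icc 0 1)
    (ht : (y₀ + x₀ * β + ε₂ - β * ε₁) / (1 - β * α) ∈ Icc 0 1) :
    ((x₀ + y₀ * α) / (1 - α * β) + ε₁ / 2, (y₀ + x₀ * β) / (1 - β * α) + ε₂ / 2) ∈ K := by
  have hD' : 1 - β * α ≠ 0 := by rwa [mul_comm]
  convert midpoint_segments_mem hK h₀ h₁ h₀' h₁' hs ht using 1
  ext <;> field_simp <;> ring

end EdgePoints

theorem exists_Icc_prod_Icc_subset_of_edge_points {K : Set (ℝ × ℝ)} (hK : Convex ℝ K)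
    {u x₀ x₁ y₀ y₁ : ℝ} (hu : 0 < u) (h₀ : (x₀, 0) ∈ K) (h₁ : (x₁, 1) ∈ K)
    (h₀' : (0, y₀) ∈ K) (h₁' : (1, y₁) ∈ K) (hx₀ : x₀ ∈ Icc (2 * u) (1 - 2 * u))
    (hx₁ : x₁ ∈ Icc (2 * u) (1 - 2 * u)) (hy₀ : y₀ ∈ Icc (2 * u) (1 - 2 * u))
    (hy₁ : y₁ ∈ Icc (2 * u) (1 - 2 * u)) :
    ∃ x : ℝ × ℝ, Icc x.1 (x.1 + u) ×ˢ Icc x.2 (x.2 + u) ⊆ K := by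
  obtain ⟨α, rfl⟩ : ∃ α, x₁ = x₀ + α := ⟨x₁ - x₀, by ring⟩
  obtain ⟨β, rfl⟩ : ∃ β, y₁ = y₀ + β := ⟨y₁ - y₀, by ring⟩
  have hD : 0 < 1 - α * β := by
    have hα : |α| < 1 := abs_lt.2 ⟨by linarith [hx₀.2, hx₁.1], by linarith [hx₀.1, hx₁.2]⟩
    have hβ : |β| ≤ 1 := abs_le.2 ⟨by linarith [hy₀.2, hy₁.1], by linarith [hy₀.1, hy₁.2]⟩
    have : |α * β| < 1 := by
      rw [abs_mul]; exact mul_lt_one_of_nonneg_of_lt_one_left (abs_nonneg α) hα hβ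
    linarith [le_abs_self (α * β)]
  have hunit : Icc (2 * u) (1 - 2 * u) ⊆ Icc 0 1 := Icc_subset_Icc (by linarith) (by linarith)
  set X := (x₀ + y₀ * α) / (1 - α * β)
  set Y := (y₀ + x₀ * β) / (1 - β * α)
  refine ⟨(X - u / 2, Y - u / 2), ?_⟩
  rintro ⟨p, q⟩ ⟨⟨hp₀, hp₁⟩, ⟨hq₀, hq₁⟩⟩
  obtain ⟨ε₁, hε₁, rfl⟩ : ∃ ε₁, |ε₁| ≤ u ∧ p = X + ε₁ / 2 :=
    ⟨2 * (p - X), abs_le.2 ⟨by linarith, by linarith⟩, by ring⟩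
  obtain ⟨ε₂, hε₂, rfl⟩ : ∃ ε₂, |ε₂| ≤ u ∧ q = Y + ε₂ / 2 :=
    ⟨2 * (q - Y), abs_le.2 ⟨by linarith, by linarith⟩, by ring⟩
  exact crossing_add_mem hK h₀ h₁ h₀' h₁' hD.ne'
    (crossing_param_mem_Icc hx₀ hx₁ (hunit hy₀) (hunit hy₁) hε₁ hε₂ hD)
    (crossing_param_mem_Icc hy₀ hy₁ (hunit hx₀) (hunit hx₁) hε₂ hε₁ (by rwa [mul_comm]))

theorem reverse_pur_rescaling_general (K : Set (ℝ × ℝ))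
    (hK : K ⊆ Set.Icc (0 : ℝ) 1 ×ˢ Set.Icc (0 : ℝ) 1)
    (hconv : Convex ℝ K)
    (hbot : ∃ z ∈ K, z.2 = 0) (htop : ∃ z ∈ K, z.2 = 1)
    (hleft : ∃ z ∈ K, z.1 = 0) (hright : ∃ z ∈ K, z.1 = 1) :
    2 * sSup {r : ℝ | 0 ≤ r ∧ ∃ x : ℝ × ℝ,
        Set.Icc x.1 (x.1 + r) ×ˢ Set.Icc x.2 (x.2 + r) ⊆ K} ≥
      sInf {v : ℝ | ∃ z ∈ K, ∃ c₁ ∈ ({0, 1} : Set ℝ), ∃ c₂ ∈ ({0, 1} : Set ℝ),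
        v = (|z.1 - c₁| + |z.2 - c₂|) / 2} := by
  set U := sInf {v : ℝ | ∃ z ∈ K, ∃ c₁ ∈ ({0, 1} : Set ℝ), ∃ c₂ ∈ ({0, 1} : Set ℝ),
    v = (|z.1 - c₁| + |z.2 - c₂|) / 2}
  have hU : ∀ z ∈ K, ∀ c₁ ∈ ({0, 1} : Set ℝ), ∀ c₂ ∈ ({0, 1} : Set ℝ),
      U ≤ (|z.1 - c₁| + |z.2 - c₂|) / 2 := fun z hz c₁ hc₁ c₂ hc₂ =>
    csInf_le ⟨0, by rintro _ ⟨z, -, c₁, -, c₂, -, rfl⟩; positivity⟩ ⟨z, hz, c₁, hc₁, c₂, hc₂, rfl⟩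
  have hbdd : BddAbove {r : ℝ | 0 ≤ r ∧ ∃ x : ℝ × ℝ,
      Set.Icc x.1 (x.1 + r) ×ˢ Set.Icc x.2 (x.2 + r) ⊆ K} :=
    ⟨1, fun r ⟨hr, _, hx⟩ => le_one_of_Icc_prod_Icc_subset hK hr hx⟩
  obtain ⟨⟨x₀, _⟩, h₀, rfl⟩ := hbot
  obtain ⟨⟨x₁, _⟩, h₁, rfl⟩ := htop
  obtain ⟨⟨_, y₀⟩, h₀', rfl⟩ := hleft
  obtain ⟨⟨_, y₁⟩, h₁', rfl⟩ := hright
  rcases le_or_gt U 0 with hU₀ | hU₀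
  · linarith [le_csSup hbdd ⟨le_rfl, (x₀, 0), by simpa using h₀⟩]
  · have hbox := exists_Icc_prod_Icc_subset_of_edge_points hconv hU₀ h₀ h₁ h₀' h₁'
      (fst_mem_Icc_of_corner_bound hK hU (by simp) h₀)
      (fst_mem_Icc_of_corner_bound hK hU (by simp) h₁)
      (snd_mem_Icc_of_corner_bound hK hU (by simp) h₀')
      (snd_mem_Icc_of_corner_bound hK hU (by simp) h₁')
    linarith [le_csSup hbdd ⟨hU₀.le, hbox⟩]

/-- Reverse preparation uncertainty relation for two sharp binary observables.
Let `K ⊆ [0,1]²` be a nonempty compact convex statistics set touching all four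
edges of the unit square.  With the rescaling complementarity
`C_r(K) = sup{r ≥ 0 : some translate of [0,r]² fits inside K}` and the uncertainty
`U(K) = inf over points of K and corners of half the ℓ¹-distance to the corner`,
one has `2·C_r(K) ≥ U(K)`. -/
theorem reverse_pur_rescaling (K : Set (ℝ × ℝ))
    (hK : K ⊆ Set.Icc (0 : ℝ) 1 ×ˢ Set.Icc (0 : ℝ) 1)
    (hne : K.Nonempty) (hcomp : IsCompact K) (hconv : Convex ℝ K)
    (hbot : ∃ z ∈ K, z.2 = 0) (htop : ∃ z ∈ K, z.2 = 1)
    (hleft : ∃ z ∈ K, z.1 = 0) (hright : ∃ z ∈ K, z.1 = 1) :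
    2 * sSup {r : ℝ | 0 ≤ r ∧ ∃ x : ℝ × ℝ,
        Set.Icc x.1 (x.1 + r) ×ˢ Set.Icc x.2 (x.2 + r) ⊆ K} ≥
      sInf {v : ℝ | ∃ z ∈ K, ∃ c₁ ∈ ({0, 1} : Set ℝ), ∃ c₂ ∈ ({0, 1} : Set ℝ),
        v = (|z.1 - c₁| + |z.2 - c₂|) / 2} :=
  reverse_pur_rescaling_general K hK hconv hbot htop hleft hright
end
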